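/- One-step simulation of weak call-by-value lambda reduction by Φ: if M →v N, t is a canonical Φ-term, and ⌈t⌉ = M, then there exists u with t → u in Φ and ⌈u⌉ = N. -/

import Mathlib

/-- Pure untyped λ-terms with named variables. -/
inductive Tm : Type
  | var : ℕ → Tm
  | lam : ℕ → Tm → Tm
  | app : Tm → Tm → Tm
deriving DecidableEq

namespace Tm

/-- Free variables. -/
def fv : Tm → Finset ℕ
  | var x => {x}
  | lam x M => fv M \ {x}
  | app M N => fv M ∪ fv N

/-- A term is closed when it has no free variables. -/
def Closed (M : Tm) : Prop := fv M = ∅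

/-- Values: variables and abstractions. -/
def IsValue : Tm → Prop
  | var _ => True
  | lam _ _ => True
  | app _ _ => False

/-- (Naive) substitution `M{N/x}`. -/
def subst : Tm → ℕ → Tm → Tm
  | var y, x, N => if y = x then N else var y
  | lam y P, x, N => if y = x then lam y P else lam y (subst P x N)
  | app P Q, x, N => app (subst P x N) (subst Q x N)

/-- Weak call-by-value reduction: β-redexes whose argument is a value,
closed under both application contexts, never under λ. -/
inductive Cbv : Tm → Tm → Prop
  | beta {x M V} : IsValue V → Cbv (app (lam x M) V) (subst M x V)
  | appL {M N L} : Cbv M N → Cbv (app M L) (app N L)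
  | appR {M N L} : Cbv M N → Cbv (app L M) (app L N)

/-- The subterm relation on λ-terms. -/
inductive Sub : Tm → Tm → Prop
  | refl (M) : Sub M M
  | lam {M N x} : Sub M N → Sub M (lam x N)
  | appL {M N L} : Sub M N → Sub M (app N L)
  | appR {M N L} : Sub M L → Sub M (app N L)

end Tm

/-- `M N₁ … Nₖ` (left-nested application). -/
def appList : Tm → List Tm → Tm := List.foldl Tm.app

/-- `λx₁.…λxₖ.M`. -/
def lams : List ℕ → Tm → Tm := fun xs M => xs.foldr Tm.lam M

/-- `stepsN R n a b`: `a` reduces to `b` in exactly `n` `R`-steps. -/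
def stepsN {α : Type*} (R : α → α → Prop) : ℕ → α → α → Prop
  | 0, a, b => a = b
  | n + 1, a, b => ∃ c, R a c ∧ stepsN R n c b

/-- `a` is an `R`-normal form. -/
def NormalForm {α : Type*} (R : α → α → Prop) (a : α) : Prop := ¬ ∃ b, R a b

/-- Terms of the constructor rewrite system Φ: variables, the binary function
symbol `app`, and a constructor `c_{x,M}` for each variable `x` and λ-term `M`. -/
inductive PTm : Type
  | pvar : ℕ → PTm
  | papp : PTm → PTm → PTm
  | con : ℕ → Tm → List PTm → PTm

namespace PTm

/-- The (sorted) list of free variables of a λ-term. -/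
def fvList (M : Tm) : List ℕ := (Tm.fv M).sort (· ≤ ·)

/-- The translation `⌊·⌋` from λ-terms to Φ-terms. -/
def toP : Tm → PTm
  | .var x => pvar x
  | .lam x M => con x M ((fvList (Tm.lam x M)).map pvar)
  | .app M N => papp (toP M) (toP N)

/-- Simultaneous (sequential, for closed arguments) λ-substitution `M{Nᵢ/xᵢ}`. -/
def substList (M : Tm) (xs : List ℕ) (Ns : List Tm) : Tm :=
  (xs.zip Ns).foldl (fun acc p => Tm.subst acc p.1 p.2) M

/-- The readback `⌈·⌉` from Φ-terms to λ-terms. -/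
def toL : PTm → Tm
  | pvar x => .var x
  | papp u v => .app (toL u) (toL v)
  | con x M ts =>
      substList (Tm.lam x M) (fvList (Tm.lam x M)) (ts.attach.map fun t => toL t.1)
termination_by t => sizeOf t
decreasing_by all_goals first
  | (simp_wf; have := List.sizeOf_lt_of_mem t.2; omega)
  | (simp_wf; omega)
  | simp_wf

/-- First-order substitution on Φ-terms. -/
def psubst : PTm → ℕ → PTm → PTm
  | pvar y, x, N => if y = x then N else pvar y
  | papp u v, x, N => papp (psubst u x N) (psubst v x N)
  | con y M ts, x, N => con y M (ts.attach.map fun t => psubst t.1 x N)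
termination_by t _ _ => sizeOf t
decreasing_by all_goals first
  | (simp_wf; have := List.sizeOf_lt_of_mem t.2; omega)
  | (simp_wf; omega)
  | simp_wf

/-- Simultaneous (sequential, for ground arguments) substitution on Φ-terms. -/
def psubstList (t : PTm) (xs : List ℕ) (us : List PTm) : PTm :=
  (xs.zip us).foldl (fun acc p => psubst acc p.1 p.2) t

/-- Constructor terms of Φ: ground terms built from constructors only. -/
inductive IsConT : PTm → Prop
  | con {x M ts} : (∀ t ∈ ts, IsConT t) → IsConT (con x M ts)

/-- Well-formed Φ-terms: every constructor `c_{x,M}` gets exactly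
`|FV(λx.M)|` arguments. -/
inductive WF : PTm → Prop
  | pvar (x) : WF (pvar x)
  | papp {u v} : WF u → WF v → WF (papp u v)
  | con {x M ts} : ts.length = (fvList (Tm.lam x M)).length →
      (∀ t ∈ ts, WF t) → WF (con x M ts)

/-- Canonical closed Φ-terms: constructor terms, or `app` of canonical terms. -/
inductive Canonical : PTm → Prop
  | ofCon {t} : IsConT t → Canonical t
  | papp {u v} : Canonical u → Canonical v → Canonical (papp u v)

/-- Call-by-value rewriting in Φ: the rules are
`app(c_{x,M}(x₁,…,xₙ), x) → ⌊M⌋` (with `FV(λx.M) = x₁,…,xₙ`), matched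
variables are instantiated by constructor terms, and rewriting is closed
under arbitrary contexts. -/
inductive Step : PTm → PTm → Prop
  | beta {x : ℕ} {M : Tm} {ts : List PTm} {v : PTm} :
      (∀ t ∈ ts, IsConT t) → IsConT v →
      ts.length = (fvList (Tm.lam x M)).length →
      Step (papp (con x M ts) v)
        (psubstList (toP M) (fvList (Tm.lam x M) ++ [x]) (ts ++ [v]))
  | appL {u u' v} : Step u u' → Step (papp u v) (papp u' v)
  | appR {u v v'} : Step v v' → Step (papp u v) (papp u v')
  | conArg {x M t t' l r} : Step t t' →
      Step (con x M (l ++ t :: r)) (con x M (l ++ t' :: r))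

/-- Variables occurring in a Φ-term. -/
def pvarsOf : PTm → Finset ℕ
  | pvar x => {x}
  | papp u v => pvarsOf u ∪ pvarsOf v
  | con _ _ ts => ts.attach.foldr (fun t s => pvarsOf t.1 ∪ s) ∅
termination_by t => sizeOf t
decreasing_by all_goals first
  | (simp_wf; have := List.sizeOf_lt_of_mem t.2; omega)
  | (simp_wf; omega)
  | simp_wf

/-- The subterm relation on Φ-terms. -/
inductive PSub : PTm → PTm → Prop
  | refl (t) : PSub t t
  | appL {t u v} : PSub t u → PSub t (papp u v)
  | appR {t u v} : PSub t v → PSub t (papp u v)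
  | conArg {t u x M ts} : u ∈ ts → PSub t u → PSub t (con x M ts)

end PTm


/-!
A canonical term is an application spine over constructor terms, and a constructor term
`c_{x,P}(ts)` reads back to the closed abstraction `λx.P{⌈ts⌉/FV(λx.P)}`. Hence a CBV redex
`(λx.M) V` in `⌈t⌉` lies over `app(c_{x,P}(ts), v)` with `v` a constructor term (the only
canonical terms reading back to values), and the Φ-rule fires there. Its contractum reads back to
`M{V/x}` because all substituted terms are closed: sequential naive substitution of closed terms
is capture-free and agrees with simultaneous substitution, and readback commutes with
substituting constructor terms into `⌊P⌋`.
-/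

namespace Tm

def ssub : Tm → (ℕ → Tm) → Tm
  | var x, σ => σ x
  | lam y P, σ => lam y (ssub P (Function.update σ y (var y)))
  | app P Q, σ => app (ssub P σ) (ssub Q σ)

theorem Closed.fv_eq_empty {N : Tm} (hN : N.Closed) : N.fv = ∅ := hN

theorem ssub_congr {A : Tm} {σ τ : ℕ → Tm} (h : ∀ x ∈ A.fv, σ x = τ x) :
    A.ssub σ = A.ssub τ := by
  induction A generalizing σ τ with
  | var y => exact h y (by simp [fv])
  | lam y P ih =>
    refine congrArg (lam y) (ih fun x hx => ?_)
    by_cases hxy : x = y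
    · simp [hxy]
    · simpa [Function.update, hxy] using h x (by simp [fv, hx, hxy])
  | app P Q ihP ihQ =>
    rw [ssub, ssub, ihP fun x hx => h x (by simp [fv, hx]),
      ihQ fun x hx => h x (by simp [fv, hx])]

@[simp]
theorem ssub_var (A : Tm) : A.ssub var = A := by
  induction A with
  | var y => rfl
  | lam y P ih => rw [ssub, Function.update_eq_self, ih]
  | app P Q ihP ihQ => rw [ssub, ihP, ihQ]

theorem Closed.ssub_eq {N : Tm} (hN : N.Closed) (σ : ℕ → Tm) : N.ssub σ = N := by
  rw [ssub_congr (τ := var) fun x hx => by simp [hN.fv_eq_empty] at hx, ssub_var]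

@[simp]
theorem subst_var_self (A : Tm) (x : ℕ) : A.subst x (var x) = A := by
  induction A with
  | var y => by_cases h : y = x <;> simp [subst, h]
  | lam y P ih => by_cases h : y = x <;> simp [subst, h, ih]
  | app P Q ihP ihQ => simp [subst, ihP, ihQ]

theorem ssub_subst {N : Tm} (hN : N.Closed) (A : Tm) (z : ℕ) (σ : ℕ → Tm) :
    (A.subst z N).ssub σ = A.ssub (Function.update σ z N) := by
  induction A generalizing σ with
  | var y => by_cases h : y = z <;> simp [subst, ssub, h, hN.ssub_eq]
  | lam y P ih =>
    by_cases h : y = z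
    · simp [subst, ssub, h]
    · simp [subst, ssub, h, ih, Function.update_comm h]
  | app P Q ihP ihQ => simp [subst, ssub, ihP, ihQ]

theorem fv_subst_of_closed {N : Tm} (hN : N.Closed) (A : Tm) (x : ℕ) :
    (A.subst x N).fv = A.fv \ {x} := by
  induction A with
  | var y =>
    by_cases h : y = x
    · simp [subst, fv, h, hN.fv_eq_empty]
    · simp [subst, fv, h, Finset.sdiff_singleton_eq_erase, Finset.erase_eq_of_notMem, Ne.symm h]
  | lam y P ih =>
    by_cases h : y = x
    · subst h; simp [subst, fv]
    · simp only [subst, h, if_false, fv, ih, sdiff_sdiff_comm]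
  | app P Q ihP ihQ => simp [subst, fv, ihP, ihQ, Finset.union_sdiff_distrib]

end Tm

namespace PTm

open Tm

theorem fvList_nodup (M : Tm) : (fvList M).Nodup := Finset.sort_nodup _ _

@[simp]
theorem mem_fvList {x : ℕ} {M : Tm} : x ∈ fvList M ↔ x ∈ M.fv := Finset.mem_sort _

theorem fvList_toFinset (M : Tm) : (fvList M).toFinset = M.fv := Finset.sort_toFinset _ _

theorem notMem_fvList_lam (y : ℕ) (M : Tm) : y ∉ fvList (lam y M) := by
  simp [fv]

theorem substList_cons (A : Tm) (z : ℕ) (zs : List ℕ) (N : Tm) (Ns : List Tm) :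
    substList A (z :: zs) (N :: Ns) = substList (A.subst z N) zs Ns := rfl

theorem substList_append (A : Tm) {xs : List ℕ} {Ns : List Tm} (h : xs.length = Ns.length)
    (ys : List ℕ) (Ms : List Tm) :
    substList A (xs ++ ys) (Ns ++ Ms) = substList (substList A xs Ns) ys Ms := by
  rw [substList, List.zip_append h, List.foldl_append]
  rfl

theorem substList_lam {y : ℕ} {zs : List ℕ} (hy : y ∉ zs) (P : Tm) (Ns : List Tm) :
    substList (lam y P) zs Ns = lam y (substList P zs Ns) := by
  induction zs generalizing P Ns with
  | nil => rfl
  | cons z zs ih =>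
    cases Ns with
    | nil => rfl
    | cons N Ns =>
      have hyz : y ≠ z := fun h => hy (h ▸ List.mem_cons_self)
      simp only [substList_cons, subst, hyz, if_false]
      exact ih (fun h => hy (List.mem_cons_of_mem _ h)) _ Ns

theorem fv_substList {zs : List ℕ} {Ns : List Tm} (hlen : zs.length = Ns.length)
    (hNs : ∀ N ∈ Ns, N.Closed) (A : Tm) :
    (substList A zs Ns).fv = A.fv \ zs.toFinset := by
  induction zs generalizing A Ns with
  | nil => simp [substList]
  | cons z zs ih =>
    cases Ns with
    | nil => simp at hlen
    | cons N Ns =>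
      rw [substList_cons, ih (by simpa using hlen) (fun N' h => hNs N' (List.mem_cons_of_mem _ h)),
        fv_subst_of_closed (hNs N List.mem_cons_self), List.toFinset_cons, sdiff_sdiff_left,
        Finset.insert_eq, Finset.sup_eq_union]

def lookupSubst (zs : List ℕ) (Ns : List Tm) (x : ℕ) : Tm :=
  ((zs.zip Ns).lookup x).getD (var x)

theorem lookupSubst_cons (z : ℕ) (zs : List ℕ) (N : Tm) (Ns : List Tm) :
    lookupSubst (z :: zs) (N :: Ns) = Function.update (lookupSubst zs Ns) z N := by
  funext x
  by_cases h : x = z <;> simp [lookupSubst, List.lookup_cons, h, beq_false_of_ne]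

theorem lookupSubst_of_notMem {zs : List ℕ} {x : ℕ} (hx : x ∉ zs) (Ns : List Tm) :
    lookupSubst zs Ns x = var x := by
  induction zs generalizing Ns with
  | nil => rfl
  | cons z zs ih =>
    cases Ns with
    | nil => rfl
    | cons N Ns =>
      rw [List.mem_cons, not_or] at hx
      rw [lookupSubst_cons, Function.update_of_ne hx.1, ih hx.2]

theorem lookupSubst_map_self {xs : List ℕ} {x : ℕ} (hx : x ∈ xs) (σ : ℕ → Tm) :
    lookupSubst xs (xs.map σ) x = σ x := by
  induction xs with
  | nil => simp at hx
  | cons a xs ih =>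
    rw [List.map_cons, lookupSubst_cons]
    by_cases h : x = a
    · rw [h, Function.update_self]
    · rw [Function.update_of_ne h, ih (List.mem_of_ne_of_mem h hx)]

theorem lookupSubst_closed_or_var {zs : List ℕ} {Ns : List Tm} (hNs : ∀ N ∈ Ns, N.Closed)
    (x : ℕ) : (lookupSubst zs Ns x).Closed ∨ lookupSubst zs Ns x = var x := by
  induction zs generalizing Ns with
  | nil => exact Or.inr rfl
  | cons z zs ih =>
    cases Ns with
    | nil => exact Or.inr rfl
    | cons N Ns =>
      rw [lookupSubst_cons]
      by_cases h : x = z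
      · exact Or.inl (by rw [h, Function.update_self]; exact hNs N List.mem_cons_self)
      · rw [Function.update_of_ne h]
        exact ih fun N' h' => hNs N' (List.mem_cons_of_mem _ h')

/-- Closed arguments cannot be captured, and substituting `var z` for `z` changes nothing, so
the sequential substitution is simultaneous. -/
theorem substList_eq_ssub {zs : List ℕ} (hzs : zs.Nodup) {Ns : List Tm}
    (hNs : ∀ p ∈ zs.zip Ns, p.2.Closed ∨ p.2 = var p.1) (A : Tm) :
    substList A zs Ns = A.ssub (lookupSubst zs Ns) := by
  induction zs generalizing A Ns with
  | nil => exact (ssub_var A).symm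
  | cons z zs ih =>
    cases Ns with
    | nil => exact (ssub_var A).symm
    | cons N Ns =>
      obtain ⟨hz, hzs⟩ := List.nodup_cons.mp hzs
      rw [substList_cons, ih hzs (fun p hp => hNs p (List.mem_cons_of_mem _ hp)),
        lookupSubst_cons]
      rcases hNs (z, N) List.mem_cons_self with hN | hN
      · exact ssub_subst hN A z _
      · rw [show N = var z from hN, subst_var_self, ← lookupSubst_of_notMem hz Ns,
          Function.update_eq_self]

@[simp]
theorem toL_papp (u v : PTm) : toL (papp u v) = app (toL u) (toL v) := by
  rw [toL]

theorem toL_con (x : ℕ) (M : Tm) (ts : List PTm) :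
    toL (con x M ts) = substList (lam x M) (fvList (lam x M)) (ts.map toL) := by
  rw [toL, List.attach_map_val]

theorem toL_con_eq_lam (x : ℕ) (M : Tm) (ts : List PTm) :
    toL (con x M ts) = lam x (substList M (fvList (lam x M)) (ts.map toL)) := by
  rw [toL_con, substList_lam (notMem_fvList_lam x M)]

theorem IsConT.toL_closed {t : PTm} (hg : IsConT t) (hwf : WF t) : (toL t).Closed := by
  induction hg with
  | @con x M ts _ ih =>
    cases hwf with
    | con hlen hwts =>
      have hNs : ∀ N ∈ ts.map toL, N.Closed := by
        simp only [List.mem_map, forall_exists_index, and_imp, forall_apply_eq_imp_iff₂]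
        exact fun t ht => ih t ht (hwts t ht)
      rw [toL_con, Tm.Closed, fv_substList (by simp [hlen]) hNs, fvList_toFinset, sdiff_self]
      rfl

@[simp]
theorem psubst_papp (u v : PTm) (z : ℕ) (w : PTm) :
    psubst (papp u v) z w = papp (psubst u z w) (psubst v z w) := by
  rw [psubst]

theorem psubst_con (x : ℕ) (M : Tm) (ts : List PTm) (z : ℕ) (w : PTm) :
    psubst (con x M ts) z w = con x M (ts.map (psubst · z w)) := by
  rw [psubst, List.attach_map_val (f := (psubst · z w))]

theorem IsConT.psubst_eq_self {t : PTm} (hg : IsConT t) (z : ℕ) (w : PTm) :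
    psubst t z w = t := by
  induction hg with
  | con _ ih => rw [psubst_con, List.map_congr_left ih, List.map_id']

theorem psubstList_cons (t : PTm) (z : ℕ) (zs : List ℕ) (w : PTm) (ws : List PTm) :
    psubstList t (z :: zs) (w :: ws) = psubstList (psubst t z w) zs ws := rfl

theorem IsConT.psubstList_eq_self {t : PTm} (hg : IsConT t) (zs : List ℕ) (ws : List PTm) :
    psubstList t zs ws = t := by
  induction zs generalizing ws with
  | nil => rfl
  | cons z zs ih =>
    cases ws with
    | nil => rfl
    | cons w ws => rw [psubstList_cons, hg.psubst_eq_self, ih]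

theorem psubstList_papp (u v : PTm) (zs : List ℕ) (ws : List PTm) :
    psubstList (papp u v) zs ws = papp (psubstList u zs ws) (psubstList v zs ws) := by
  induction zs generalizing u v ws with
  | nil => rfl
  | cons z zs ih =>
    cases ws with
    | nil => rfl
    | cons w ws => rw [psubstList_cons, psubst_papp, ih]; rfl

theorem psubstList_con (x : ℕ) (M : Tm) (ts : List PTm) (zs : List ℕ) (ws : List PTm) :
    psubstList (con x M ts) zs ws = con x M (ts.map (psubstList · zs ws)) := by
  induction zs generalizing ts ws with
  | nil => simp [psubstList]
  | cons z zs ih =>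
    cases ws with
    | nil => simp [psubstList]
    | cons w ws => rw [psubstList_cons, psubst_con, ih, List.map_map]; rfl

theorem toL_psubstList_pvar {ws : List PTm} (hws : ∀ w ∈ ws, IsConT w) (x : ℕ)
    (zs : List ℕ) :
    toL (psubstList (pvar x) zs ws) = lookupSubst zs (ws.map toL) x := by
  induction zs generalizing ws with
  | nil => rw [psubstList, List.zip_nil_left, List.foldl_nil, toL]; rfl
  | cons z zs ih =>
    cases ws with
    | nil => rw [psubstList, List.zip_nil_right, List.foldl_nil, toL]; rfl
    | cons w ws =>
      rw [psubstList_cons, List.map_cons, lookupSubst_cons]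
      by_cases h : x = z
      · rw [psubst, if_pos h, (hws w List.mem_cons_self).psubstList_eq_self, h,
          Function.update_self]
      · rw [psubst, if_neg h, Function.update_of_ne h,
          ih fun w' h' => hws w' (List.mem_cons_of_mem _ h')]

theorem substList_map_eq_ssub {xs : List ℕ} (hxs : xs.Nodup) {σ : ℕ → Tm}
    (hσ : ∀ x, (σ x).Closed ∨ σ x = var x) (A : Tm) :
    substList A xs (xs.map σ) = A.ssub (lookupSubst xs (xs.map σ)) := by
  have hzip : xs.zip (xs.map σ) = xs.map fun a => (a, σ a) := by
    simpa using List.zip_map' (f := id) (g := σ) (l := xs)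
  refine substList_eq_ssub hxs (fun p hp => ?_) A
  rw [hzip] at hp
  obtain ⟨a, -, rfl⟩ := List.mem_map.mp hp
  exact hσ a

theorem toL_psubstList_toP {ws : List PTm} (hg : ∀ w ∈ ws, IsConT w)
    (hcl : ∀ N ∈ ws.map toL, N.Closed) (zs : List ℕ) (M : Tm) :
    toL (psubstList (toP M) zs ws) = M.ssub (lookupSubst zs (ws.map toL)) := by
  induction M with
  | var x => exact toL_psubstList_pvar hg x zs
  | app P Q ihP ihQ => rw [toP, psubstList_papp, toL_papp, ihP, ihQ]; rfl
  | lam y P _ =>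
    set σ := lookupSubst zs (ws.map toL)
    have hargs : (((fvList (lam y P)).map pvar).map (psubstList · zs ws)).map toL =
        (fvList (lam y P)).map σ := by
      simp only [List.map_map]
      exact List.map_congr_left fun a _ => toL_psubstList_pvar hg a zs
    rw [toP, psubstList_con, toL_con, hargs,
      substList_map_eq_ssub (fvList_nodup _) (lookupSubst_closed_or_var hcl)]
    exact ssub_congr fun x hx => lookupSubst_map_self (mem_fvList.mpr hx) σ

theorem toL_beta_contractum {y : ℕ} {P : Tm} {ts : List PTm} {v : PTm}
    (hts : ∀ t ∈ ts, IsConT t ∧ WF t) (hv : IsConT v) (hwv : WF v)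
    (hlen : ts.length = (fvList (lam y P)).length) :
    toL (psubstList (toP P) (fvList (lam y P) ++ [y]) (ts ++ [v])) =
      (substList P (fvList (lam y P)) (ts.map toL)).subst y (toL v) := by
  have hws : ∀ w ∈ ts ++ [v], IsConT w ∧ WF w := fun w hw =>
    (List.mem_append.mp hw).elim (hts w) fun h => List.mem_singleton.mp h ▸ ⟨hv, hwv⟩
  have hcl : ∀ N ∈ (ts ++ [v]).map toL, N.Closed := by
    simp only [List.mem_map, forall_exists_index, and_imp, forall_apply_eq_imp_iff₂]
    exact fun w hw => (hws w hw).1.toL_closed (hws w hw).2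
  have hnd : (fvList (lam y P) ++ [y]).Nodup :=
    (fvList_nodup _).append (List.nodup_singleton y)
      (List.disjoint_singleton.mpr (notMem_fvList_lam y P))
  rw [toL_psubstList_toP (fun w hw => (hws w hw).1) hcl,
    ← substList_eq_ssub hnd (fun p hp => Or.inl (hcl p.2 (List.of_mem_zip hp).2)),
    List.map_append, substList_append _ (by simp [hlen])]
  rfl

theorem Canonical.isConT_of_isValue {t : PTm} (hc : Canonical t) (hv : (toL t).IsValue) :
    IsConT t := by
  cases hc with
  | ofCon h => exact h
  | papp => simp [IsValue] at hv

theorem Canonical.exists_papp_of_toL_eq_app {t : PTm} {A B : Tm} (hc : Canonical t)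
    (ht : toL t = app A B) :
    ∃ u v, t = PTm.papp u v ∧ Canonical u ∧ Canonical v ∧ toL u = A ∧ toL v = B := by
  cases hc with
  | ofCon h => cases h; simp [toL_con_eq_lam] at ht
  | papp hu hv =>
    obtain ⟨hA, hB⟩ := app.inj (toL_papp _ _ ▸ ht)
    exact ⟨_, _, rfl, hu, hv, hA, hB⟩

theorem Canonical.exists_step_of_toL_eq_redex {t : PTm} {x : ℕ} {M V : Tm} (hc : Canonical t)
    (hwf : WF t) (ht : toL t = app (lam x M) V) (hV : V.IsValue) :
    ∃ u, Step t u ∧ toL u = M.subst x V := by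
  obtain ⟨u, v, rfl, hcu, hcv, hu, rfl⟩ := hc.exists_papp_of_toL_eq_app ht
  obtain _ | ⟨hwu, hwv⟩ := hwf
  obtain ⟨hts⟩ := hcu.isConT_of_isValue (hu ▸ trivial)
  obtain _ | _ | ⟨hlen, hwts⟩ := hwu
  obtain ⟨rfl, rfl⟩ := lam.inj (toL_con_eq_lam _ _ _ ▸ hu)
  have hgv := hcv.isConT_of_isValue hV
  exact ⟨_, .beta hts hgv hlen,
    toL_beta_contractum (fun t ht => ⟨hts t ht, hwts t ht⟩) hgv hwv hlen⟩

end PTm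

/-- one-step simulation of weak CBV λ-reduction by Φ:
if `M →v N`, `t` is canonical and `⌈t⌉ = M`, then `t → u` in Φ for some `u`
with `⌈u⌉ = N`. -/
theorem cbv_simulated (M N : Tm) (t : PTm) (h : Tm.Cbv M N)
    (hwf : PTm.WF t) (hc : PTm.Canonical t) (ht : PTm.toL t = M) :
    ∃ u, PTm.Step t u ∧ PTm.toL u = N := by
  induction h generalizing t with
  | beta hV => exact hc.exists_step_of_toL_eq_redex hwf ht hV
  | appL _ ih =>
    obtain ⟨u, v, rfl, hcu, -, hu, rfl⟩ := hc.exists_papp_of_toL_eq_app ht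
    obtain _ | ⟨hwu, -⟩ := hwf
    obtain ⟨u', hstep, rfl⟩ := ih u hwu hcu hu
    exact ⟨.papp u' v, .appL hstep, PTm.toL_papp u' v⟩
  | appR _ ih =>
    obtain ⟨u, v, rfl, -, hcv, rfl, hv⟩ := hc.exists_papp_of_toL_eq_app ht
    obtain _ | ⟨-, hwv⟩ := hwf
    obtain ⟨v', hstep, rfl⟩ := ih v hwv hcv hv
    exact ⟨.papp u v', .appR hstep, PTm.toL_papp u v'⟩
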